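/- If f is a regular choice function, then for every classical sentence α, the sentence ¬f(α,¬α) ↔ f(¬α,¬¬α) is a classical contradiction; consequently, for every truth assignment M, ⟨M,f⟩ ⊭ₛ ¬(α|¬α) ↔ ¬α|¬¬α, so the scheme ¬(φ|ψ) ↔ ¬φ|¬ψ fails in every model with regular f. -/
import Mathlib


/-- Classical propositional formulas: atoms, negation, conjunction. -/
inductive PF : Type where
  | atom : ℕ → PF
  | neg : PF → PF
  | conj : PF → PF → PF

namespace PF

def eval (M : ℕ → Bool) : PF → Bool
  | atom n => M n
  | neg a => !(eval M a)
  | conj a b => eval M a && eval M b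

def disj (a b : PF) : PF := neg (conj (neg a) (neg b))
def imp (a b : PF) : PF := neg (conj a (neg b))
def iff (a b : PF) : PF := conj (imp a b) (imp b a)

/-- Classical logical equivalence. -/
def equiv (a b : PF) : Prop := ∀ M : ℕ → Bool, eval M a = eval M b

end PF

/-- A choice function for pairs of classical sentences. -/
structure ChoiceFun where
  f : PF → PF → PF
  symm : ∀ a b, f a b = f b a
  choice : ∀ a b, f a b = a ∨ f a b = b

/-- Sentences of the extended language L_s with superposition `sup`. -/
inductive SF : Type where
  | atom : ℕ → SF
  | neg : SF → SF
  | conj : SF → SF → SF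
  | sup : SF → SF → SF

namespace SF
def disj (a b : SF) : SF := neg (conj (neg a) (neg b))
def imp (a b : SF) : SF := neg (conj a (neg b))
def iff (a b : SF) : SF := conj (imp a b) (imp b a)
end SF

/-- Embedding of classical sentences into L_s. -/
def PF.toSF : PF → SF
  | .atom n => SF.atom n
  | .neg a => SF.neg a.toSF
  | .conj a b => SF.conj a.toSF b.toSF

/-- The collapsing function generated by a choice function. -/
def collapse (c : ChoiceFun) : SF → PF
  | .atom n => PF.atom n
  | .neg a => PF.neg (collapse c a)
  | .conj a b => PF.conj (collapse c a) (collapse c b)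
  | .sup a b => c.f (collapse c a) (collapse c b)

/-- Satisfaction: ⟨M,f⟩ ⊨ₛ φ iff M ⊨ f̄(φ). -/
def Sat (M : ℕ → Bool) (c : ChoiceFun) (φ : SF) : Prop :=
  (collapse c φ).eval M = true

/-- A regular total ordering of Sen(L). -/
def RegularOrd (r : LinearOrder PF) : Prop :=
  ∀ a b a' b' : PF, ¬ PF.equiv a b → r.lt a b → PF.equiv a a' → PF.equiv b b' → r.lt a' b'

/-- A ¬-decreasing total ordering of Sen(L). -/
def DecreasingOrd (r : LinearOrder PF) : Prop :=
  ∀ a b : PF, ¬ PF.equiv a b → (r.lt a b ↔ r.lt (PF.neg b) (PF.neg a))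

/-- A regular choice function. -/
def RegularFun (f : PF → PF → PF) : Prop :=
  ∀ a a' b : PF, PF.equiv a a' → PF.equiv (f a b) (f a' b)

lemma collapse_toSF (c : ChoiceFun) : ∀ a : PF, collapse c a.toSF = a := by
  intro a
  induction a with
  | atom n => rfl
  | neg a ih => simp [PF.toSF, collapse, ih]
  | conj a b iha ihb => simp [PF.toSF, collapse, iha, ihb]

/-- For regular f, ¬f(α,¬α) ↔ f(¬α,¬¬α) is a contradiction; hence the scheme
¬(φ|ψ) ↔ ¬φ|¬ψ fails in every model with regular f. -/
theorem stmt18 (c : ChoiceFun) (hreg : RegularFun c.f) :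
    ∀ a : PF,
      (∀ M : ℕ → Bool,
        (PF.iff (PF.neg (c.f a (PF.neg a)))
                (c.f (PF.neg a) (PF.neg (PF.neg a)))).eval M = false) ∧
      (∀ M : ℕ → Bool,
        ¬ Sat M c (SF.iff (SF.neg (SF.sup a.toSF (SF.neg a.toSF)))
                          (SF.sup (SF.neg a.toSF) (SF.neg (SF.neg a.toSF))))) := by
  intro a
  have hy : PF.equiv (c.f (PF.neg a) (PF.neg (PF.neg a))) (c.f a (PF.neg a)) := by
    have h1 : c.f (PF.neg a) (PF.neg (PF.neg a)) = c.f (PF.neg (PF.neg a)) (PF.neg a) :=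
      c.symm _ _
    have h2 := hreg (PF.neg (PF.neg a)) a (PF.neg a) (fun M => by simp [PF.eval])
    intro M; rw [h1]; exact h2 M
  have key : ∀ M : ℕ → Bool,
      (PF.iff (PF.neg (c.f a (PF.neg a)))
              (c.f (PF.neg a) (PF.neg (PF.neg a)))).eval M = false := by
    intro M
    have h := hy M
    simp only [PF.iff, PF.imp, PF.eval, h]
    cases (c.f a (PF.neg a)).eval M <;> rfl
  refine ⟨key, ?_⟩
  intro M hSat
  have hc : collapse c (SF.iff (SF.neg (SF.sup a.toSF (SF.neg a.toSF)))
        (SF.sup (SF.neg a.toSF) (SF.neg (SF.neg a.toSF)))) =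
      PF.iff (PF.neg (c.f a (PF.neg a))) (c.f (PF.neg a) (PF.neg (PF.neg a))) := by
    simp [SF.iff, SF.imp, PF.iff, PF.imp, collapse, collapse_toSF]
  rw [Sat, hc, key M] at hSat
  exact Bool.false_ne_true hSat
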